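/- Let C be a G-graded category over a commutative ring k and L(C) its fusion algebra. Then L(C) is an associative unital G-graded k-algebra, and if C is pivotal the map ∗ : L(C) → L(C) sending the class ⟨X, f⟩ of f ∈ End(X) to ⟨X*, f*⟩ is a well-defined involutive algebra anti-automorphism carrying L_α onto L_{α^{-1}} for every α ∈ G. -/

import Mathlib

set_option linter.unusedSectionVars false

open CategoryTheory MonoidalCategory CategoryTheory.Limits

universe w x v u v₂ u₂ v₃ u₃

namespace SurgeryHQFT

/-- A pivotal category: a monoidal category with a dual object `dual X` for every object `X`,
together with the four (co)evaluation morphisms, satisfying the zig-zag identities, the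
coincidence of left and right duals of morphisms, the coincidence of the left and right
monoidal constraints, and the unit condition. -/
class Pivotal (C : Type u) [Category.{v} C] [MonoidalCategory C] where
  dual : C → C
  ev : ∀ X : C, dual X ⊗ X ⟶ 𝟙_ C
  coev : ∀ X : C, 𝟙_ C ⟶ X ⊗ dual X
  ev' : ∀ X : C, X ⊗ dual X ⟶ 𝟙_ C
  coev' : ∀ X : C, 𝟙_ C ⟶ dual X ⊗ X
  zig₁ : ∀ X : C,
    (λ_ X).inv ≫ (coev X ▷ X) ≫ (α_ X (dual X) X).hom ≫ (X ◁ ev X) ≫ (ρ_ X).hom = 𝟙 X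
  zig₂ : ∀ X : C,
    (ρ_ (dual X)).inv ≫ (dual X ◁ coev X) ≫ (α_ (dual X) X (dual X)).inv
      ≫ (ev X ▷ dual X) ≫ (λ_ (dual X)).hom = 𝟙 (dual X)
  zig₃ : ∀ X : C,
    (ρ_ X).inv ≫ (X ◁ coev' X) ≫ (α_ X (dual X) X).inv ≫ (ev' X ▷ X) ≫ (λ_ X).hom = 𝟙 X
  zig₄ : ∀ X : C,
    (λ_ (dual X)).inv ≫ (coev' X ▷ dual X) ≫ (α_ (dual X) X (dual X)).hom
      ≫ (dual X ◁ ev' X) ≫ (ρ_ (dual X)).hom = 𝟙 (dual X)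
  dual_hom_eq : ∀ {X Y : C} (f : X ⟶ Y),
    (ρ_ (dual Y)).inv ≫ (dual Y ◁ (coev X ≫ (f ▷ dual X)))
      ≫ (α_ (dual Y) Y (dual X)).inv ≫ (ev Y ▷ dual X) ≫ (λ_ (dual X)).hom
    = (λ_ (dual Y)).inv ≫ ((coev' X ≫ (dual X ◁ f)) ▷ dual Y)
      ≫ (α_ (dual X) Y (dual Y)).hom ≫ (dual X ◁ ev' Y) ≫ (ρ_ (dual X)).hom
  constraint_eq : ∀ X Y : C,
    (ρ_ (dual X ⊗ dual Y)).inv ≫ ((dual X ⊗ dual Y) ◁ coev (Y ⊗ X))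
      ≫ (α_ (dual X) (dual Y) ((Y ⊗ X) ⊗ dual (Y ⊗ X))).hom
      ≫ (dual X ◁ ((dual Y ◁ (α_ Y X (dual (Y ⊗ X))).hom)
            ≫ (α_ (dual Y) Y (X ⊗ dual (Y ⊗ X))).inv
            ≫ (ev Y ▷ (X ⊗ dual (Y ⊗ X))) ≫ (λ_ (X ⊗ dual (Y ⊗ X))).hom))
      ≫ (α_ (dual X) X (dual (Y ⊗ X))).inv ≫ (ev X ▷ dual (Y ⊗ X)) ≫ (λ_ (dual (Y ⊗ X))).hom
    = (λ_ (dual X ⊗ dual Y)).inv ≫ (coev' (Y ⊗ X) ▷ (dual X ⊗ dual Y))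
      ≫ (α_ (dual (Y ⊗ X)) (Y ⊗ X) (dual X ⊗ dual Y)).hom
      ≫ (dual (Y ⊗ X) ◁ ((α_ Y X (dual X ⊗ dual Y)).hom
            ≫ (Y ◁ ((α_ X (dual X) (dual Y)).inv ≫ (ev' X ▷ dual Y) ≫ (λ_ (dual Y)).hom))
            ≫ ev' Y))
      ≫ (ρ_ (dual (Y ⊗ X))).hom
  unit_ev : (ρ_ (dual (𝟙_ C))).inv ≫ ev (𝟙_ C) = (λ_ (dual (𝟙_ C))).inv ≫ ev' (𝟙_ C)

namespace Pivotal

variable {C : Type u} [Category.{v} C] [MonoidalCategory C] [Pivotal C]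

/-- The dual of a morphism in a pivotal category. -/
def dualHom {X Y : C} (f : X ⟶ Y) : dual Y ⟶ dual X :=
  (ρ_ (dual Y)).inv ≫ (dual Y ◁ (coev X ≫ (f ▷ dual X)))
    ≫ (α_ (dual Y) Y (dual X)).inv ≫ (ev Y ▷ dual X) ≫ (λ_ (dual X)).hom

/-- The left trace of an endomorphism in a pivotal category. -/
def trl {X : C} (f : X ⟶ X) : 𝟙_ C ⟶ 𝟙_ C :=
  coev' X ≫ (dual X ◁ f) ≫ ev X

/-- The right trace of an endomorphism in a pivotal category. -/
def trr {X : C} (f : X ⟶ X) : 𝟙_ C ⟶ 𝟙_ C :=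
  coev X ≫ (f ▷ dual X) ≫ ev' X

/-- The left dimension of an object. -/
def diml (X : C) : 𝟙_ C ⟶ 𝟙_ C := trl (𝟙 X)

/-- The right dimension of an object. -/
def dimr (X : C) : 𝟙_ C ⟶ 𝟙_ C := trr (𝟙 X)

end Pivotal

open Pivotal

section Functors

variable {C : Type u} [Category.{v} C] [MonoidalCategory C] [Pivotal C]
variable {D : Type u₂} [Category.{v₂} D] [MonoidalCategory D] [Pivotal D]

/-- The canonical comparison morphism `F^l(X) : F(X^*) ⟶ F(X)^*` for a strong monoidal
functor between pivotal categories. -/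
def Fl (F : C ⥤ D) [m : F.Monoidal] (X : C) : F.obj (dual X) ⟶ dual (F.obj X) :=
  (ρ_ (F.obj (dual X))).inv
    ≫ (F.obj (dual X) ◁ coev (F.obj X))
    ≫ (α_ (F.obj (dual X)) (F.obj X) (dual (F.obj X))).inv
    ≫ ((Functor.LaxMonoidal.μ F (dual X) X ≫ F.map (ev X) ≫ Functor.OplaxMonoidal.η F)
        ▷ dual (F.obj X))
    ≫ (λ_ (dual (F.obj X))).hom

/-- The canonical comparison morphism `F^r(X) : F(X^*) ⟶ F(X)^*` for a strong monoidal
functor between pivotal categories. -/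
def Fr (F : C ⥤ D) [m : F.Monoidal] (X : C) : F.obj (dual X) ⟶ dual (F.obj X) :=
  (λ_ (F.obj (dual X))).inv
    ≫ (coev' (F.obj X) ▷ F.obj (dual X))
    ≫ (α_ (dual (F.obj X)) (F.obj X) (F.obj (dual X))).hom
    ≫ (dual (F.obj X) ◁ (Functor.LaxMonoidal.μ F X (dual X) ≫ F.map (ev' X)
          ≫ Functor.OplaxMonoidal.η F))
    ≫ (ρ_ (dual (F.obj X))).hom

end Functors


section MonHelpers
variable {C : Type u} [Category.{v} C] [MonoidalCategory C]
variable {D : Type u₂} [Category.{v₂} D] [MonoidalCategory D]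

/-- The unit morphism of a monoidal functor (with explicit monoidal structure). -/
def mε (F : C ⥤ D) (m : F.Monoidal) : 𝟙_ D ⟶ F.obj (𝟙_ C) :=
  letI := m; Functor.LaxMonoidal.ε F

/-- The tensorator of a monoidal functor (with explicit monoidal structure). -/
def mμ (F : C ⥤ D) (m : F.Monoidal) (X Y : C) : F.obj X ⊗ F.obj Y ⟶ F.obj (X ⊗ Y) :=
  letI := m; Functor.LaxMonoidal.μ F X Y

/-- The inverse of the unit morphism of a monoidal functor. -/
def mη (F : C ⥤ D) (m : F.Monoidal) : F.obj (𝟙_ C) ⟶ 𝟙_ D :=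
  letI := m; Functor.OplaxMonoidal.η F

/-- The inverse of the tensorator of a monoidal functor. -/
def mδ (F : C ⥤ D) (m : F.Monoidal) (X Y : C) : F.obj (X ⊗ Y) ⟶ F.obj X ⊗ F.obj Y :=
  letI := m; Functor.OplaxMonoidal.δ F X Y

end MonHelpers

section Graded

variable (k : Type w) [CommRing k] (G : Type x) [Group G]
variable (C : Type u) [Category.{v} C] [MonoidalCategory C] [Pivotal C]
  [Preadditive C] [CategoryTheory.Linear k C] [MonoidalPreadditive C] [MonoidalLinear k C]

/-- A pivotal `G`-graded category over `k`: a system of pairwise disjoint homogeneous degrees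
for objects such that the unit is of degree `1`, monoidal products multiply the degrees,
duals invert degrees, and morphisms between objects of different degrees vanish. -/
structure GGraded where
  mem : C → G → Prop
  mem_unique : ∀ {X : C} {a b : G}, mem X a → mem X b → a = b
  unit_mem : mem (𝟙_ C) 1
  tensor_mem : ∀ {X Y : C} {a b : G}, mem X a → mem Y b → mem (X ⊗ Y) (a * b)
  dual_mem : ∀ {X : C} {a : G}, mem X a → mem (Pivotal.dual X) a⁻¹
  hom_vanish : ∀ {X Y : C} {a b : G}, mem X a → mem Y b → a ≠ b → ∀ f : X ⟶ Y, f = 0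

variable {G C}

/-- The canonical identification `(φ a).obj X ⟶ (φ b).obj X` induced by an equality `a = b`. -/
def φObjCast (φ : G → C ⥤ C) {a b : G} (h : a = b) (X : C) : (φ a).obj X ⟶ (φ b).obj X :=
  eqToHom (by rw [h])

variable (G C)

/-- A (pivotal) `G`-crossed category: a pivotal `G`-graded category equipped with a crossing,
i.e. a strong monoidal functor from `G` to the monoidal category of `k`-linear strong monoidal
auto-equivalences of `C`, such that `φ a` maps degree `b` to degree `a⁻¹ * b * a`. -/
structure GCrossedCat extends GGraded G C where
  φ : G → C ⥤ C
  φM : ∀ a : G, (φ a).Monoidal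
  φ_add : ∀ (a : G) {X Y : C} (f g : X ⟶ Y), (φ a).map (f + g) = (φ a).map f + (φ a).map g
  φ_smul : ∀ (a : G) (c : k) {X Y : C} (f : X ⟶ Y), (φ a).map (c • f) = c • (φ a).map f
  φ_equiv : ∀ a : G, (φ a).IsEquivalence
  φ_mem : ∀ (a : G) {X : C} {b : G}, mem X b → mem ((φ a).obj X) (a⁻¹ * b * a)
  φ₂ : ∀ (a b : G) (X : C), (φ a).obj ((φ b).obj X) ≅ (φ (b * a)).obj X
  φ₀ : ∀ X : C, X ≅ (φ (1 : G)).obj X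
  φ₂_natural : ∀ (a b : G) {X Y : C} (f : X ⟶ Y),
    (φ a).map ((φ b).map f) ≫ (φ₂ a b Y).hom = (φ₂ a b X).hom ≫ (φ (b * a)).map f
  φ₀_natural : ∀ {X Y : C} (f : X ⟶ Y),
    f ≫ (φ₀ Y).hom = (φ₀ X).hom ≫ (φ (1 : G)).map f
  φ₂_monoidal : ∀ (a b : G) (X Y : C),
    mμ (φ a) (φM a) ((φ b).obj X) ((φ b).obj Y)
        ≫ (φ a).map (mμ (φ b) (φM b) X Y)
        ≫ (φ₂ a b (X ⊗ Y)).hom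
      = ((φ₂ a b X).hom ⊗ₘ (φ₂ a b Y).hom) ≫ mμ (φ (b * a)) (φM (b * a)) X Y
  φ₂_unit : ∀ (a b : G),
    mε (φ (b * a)) (φM (b * a))
      = mε (φ a) (φM a) ≫ (φ a).map (mε (φ b) (φM b)) ≫ (φ₂ a b (𝟙_ C)).hom
  φ₀_monoidal : ∀ X Y : C,
    (φ₀ (X ⊗ Y)).hom
      = ((φ₀ X).hom ⊗ₘ (φ₀ Y).hom) ≫ mμ (φ (1 : G)) (φM 1) X Y
  φ₀_unit : (φ₀ (𝟙_ C)).hom = mε (φ (1 : G)) (φM 1)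
  φ_assoc : ∀ (a b c : G) (X : C),
    (φ₂ a b ((φ c).obj X)).hom ≫ (φ₂ (b * a) c X).hom
      = (φ a).map ((φ₂ b c X).hom) ≫ (φ₂ a (c * b) X).hom
          ≫ φObjCast φ (mul_assoc c b a) X
  φ_unit_left : ∀ (a : G) (X : C),
    (φ a).map ((φ₀ X).hom) ≫ (φ₂ a 1 X).hom ≫ φObjCast φ (one_mul a) X = 𝟙 ((φ a).obj X)
  φ_unit_right : ∀ (a : G) (X : C),
    (φ₀ ((φ a).obj X)).hom ≫ (φ₂ 1 a X).hom ≫ φObjCast φ (mul_one a) X = 𝟙 ((φ a).obj X)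

variable {k G C}

namespace GCrossedCat

variable (𝒞 : GCrossedCat k G C)

/-- The crossing of `𝒞` is pivotal if each functor `φ a` is pivotal, i.e. `F^l = F^r`. -/
def PivotalCrossing : Prop :=
  ∀ (a : G) (X : C), Fl (𝒞.φ a) (m := 𝒞.φM a) X = Fr (𝒞.φ a) (m := 𝒞.φM a) X

/-- Given (the inverse `ψi` of) an isomorphism `ψ : X ≅ (φ a).obj Y`, this is the isomorphism
`overline ψ : Y ⟶ (φ a⁻¹).obj X`, defined as `φ_{a⁻¹}(ψ⁻¹) ∘ φ₂(a⁻¹,a)_Y⁻¹ ∘ (φ₀)_Y`. -/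
def barHom {X Y : C} {a : G} (ψi : (𝒞.φ a).obj Y ⟶ X) : Y ⟶ (𝒞.φ a⁻¹).obj X :=
  (𝒞.φ₀ Y).hom ≫ φObjCast 𝒞.φ (show (1 : G) = a * a⁻¹ by group) Y
    ≫ (𝒞.φ₂ a⁻¹ a Y).inv ≫ (𝒞.φ a⁻¹).map ψi

lemma mem_φ_self {X : C} {a : G} (h : 𝒞.mem X a) : 𝒞.mem ((𝒞.φ a).obj X) a := by
  have h2 : a⁻¹ * a * a = a := by group
  have := 𝒞.φ_mem a h
  rwa [h2] at this

end GCrossedCat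

end Graded

section Braided

variable (k : Type w) [CommRing k] (G : Type x) [Group G]
variable (C : Type u) [Category.{v} C] [MonoidalCategory C] [Pivotal C]
  [Preadditive C] [CategoryTheory.Linear k C] [MonoidalPreadditive C] [MonoidalLinear k C]

/-- A `G`-braided category: a `G`-crossed category equipped with a `G`-braiding
`τ_{X,Y} : X ⊗ Y ⟶ Y ⊗ φ_{|Y|}(X)` (for `Y` homogeneous), natural in both variables,
satisfying the two hexagon-type axioms and invariance under the crossing. -/
structure GBraidedCat extends GCrossedCat k G C where
  τ : ∀ (X Y : C) (b : G), mem Y b → (X ⊗ Y ⟶ Y ⊗ (φ b).obj X)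
  τ_iso : ∀ (X Y : C) (b : G) (h : mem Y b), IsIso (τ X Y b h)
  τ_nat_left : ∀ {X X' : C} (f : X ⟶ X') (Y : C) (b : G) (h : mem Y b),
    (f ▷ Y) ≫ τ X' Y b h = τ X Y b h ≫ (Y ◁ (φ b).map f)
  τ_nat_right : ∀ (X : C) {Y Y' : C} (b : G) (h : mem Y b) (h' : mem Y' b) (g : Y ⟶ Y'),
    (X ◁ g) ≫ τ X Y' b h' = τ X Y b h ≫ (g ▷ (φ b).obj X)
  braiding₁ : ∀ (X Y Z : C) (b c : G) (hY : mem Y b) (hZ : mem Z c),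
    τ X (Y ⊗ Z) (b * c) (tensor_mem hY hZ)
      = (α_ X Y Z).inv ≫ (τ X Y b hY ▷ Z) ≫ (α_ Y ((φ b).obj X) Z).hom
          ≫ (Y ◁ τ ((φ b).obj X) Z c hZ) ≫ (α_ Y Z ((φ c).obj ((φ b).obj X))).inv
          ≫ ((Y ⊗ Z) ◁ (φ₂ c b X).hom)
  braiding₂ : ∀ (X Y Z : C) (c : G) (hZ : mem Z c),
    τ (X ⊗ Y) Z c hZ
      = (α_ X Y Z).hom ≫ (X ◁ τ Y Z c hZ) ≫ (α_ X Z ((φ c).obj Y)).inv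
          ≫ (τ X Z c hZ ▷ (φ c).obj Y) ≫ (α_ Z ((φ c).obj X) ((φ c).obj Y)).hom
          ≫ (Z ◁ mμ (φ c) (φM c) X Y)
  braiding₃ : ∀ (a : G) (X Y : C) (b : G) (hY : mem Y b),
    τ ((φ a).obj X) ((φ a).obj Y) (a⁻¹ * b * a) (φ_mem a hY)
        ≫ ((φ a).obj Y ◁ ((φ₂ (a⁻¹ * b * a) a X).hom
              ≫ φObjCast φ (show a * (a⁻¹ * b * a) = b * a by group) X
              ≫ (φ₂ a b X).inv))
        ≫ mμ (φ a) (φM a) Y ((φ b).obj X)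
      = mμ (φ a) (φM a) X Y ≫ (φ a).map (τ X Y b hY)

variable {k G C}

namespace GBraidedCat

variable (𝒞 : GBraidedCat k G C)

/-- The inverse of the `G`-braiding. -/
noncomputable def τinv (X Y : C) (b : G) (h : 𝒞.mem Y b) : Y ⊗ (𝒞.φ b).obj X ⟶ X ⊗ Y :=
  letI := 𝒞.τ_iso X Y b h
  inv (𝒞.τ X Y b h)

/-- The twist `θ_X = (ev_X ⊗ id)(id_{X^*} ⊗ τ_{X,X})(coev'_X ⊗ id_X) : X ⟶ φ_{|X|}(X)`. -/
def twist (X : C) (a : G) (h : 𝒞.mem X a) : X ⟶ (𝒞.φ a).obj X :=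
  (λ_ X).inv ≫ (coev' X ▷ X) ≫ (α_ (dual X) X X).hom
    ≫ (dual X ◁ 𝒞.τ X X a h) ≫ (α_ (dual X) X ((𝒞.φ a).obj X)).inv
    ≫ (ev X ▷ (𝒞.φ a).obj X) ≫ (λ_ ((𝒞.φ a).obj X)).hom

/-- The braiding of the neutral component `C_1`. -/
def nBraiding (X Y : C) (hY : 𝒞.mem Y 1) : X ⊗ Y ⟶ Y ⊗ X :=
  𝒞.τ X Y 1 hY ≫ (Y ◁ (𝒞.φ₀ X).inv)

/-- The twist of the neutral component `C_1`. -/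
def nTwist (X : C) (hX : 𝒞.mem X 1) : X ⟶ X :=
  𝒞.twist X 1 hX ≫ (𝒞.φ₀ X).inv

end GBraidedCat

variable (k G C)

/-- A `G`-ribbon category: a pivotal `G`-braided category whose crossing is pivotal and
whose twist is self-dual. -/
structure GRibbonCat extends GBraidedCat k G C where
  crossing_pivotal : toGCrossedCat.PivotalCrossing
  twist_selfdual : ∀ (X : C) (a : G) (hX : mem X a),
    Pivotal.dualHom (toGBraidedCat.twist X a hX)
      = toGBraidedCat.twist (dual ((φ a).obj X)) a⁻¹
            (dual_mem (toGCrossedCat.mem_φ_self hX))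
          ≫ Fl (φ a⁻¹) (m := φM a⁻¹) ((φ a).obj X)
          ≫ Pivotal.dualHom
              (φObjCast φ (show (1 : G) = a * a⁻¹ by group) X ≫ (φ₂ a⁻¹ a X).inv)
          ≫ Pivotal.dualHom (φ₀ X).hom

end Braided

section FusionAlg

variable {k : Type w} [CommRing k] {G : Type x} [Group G]
variable {C : Type u} [Category.{v} C] [MonoidalCategory C] [Pivotal C]
  [Preadditive C] [CategoryTheory.Linear k C] [MonoidalPreadditive C] [MonoidalLinear k C]

variable (k) (gr : GGraded G C)

/-- The homogeneous objects of a `G`-graded category. -/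
def Homog : Type _ := {X : C // ∃ a : G, gr.mem X a}

/-- The direct sum `⊕_X End(X)` over all homogeneous objects `X`. -/
abbrev Ltilde : Type _ := DirectSum (Homog gr) (fun X => (X.1 ⟶ X.1))

/-- The canonical inclusion of `End(X)` into `Ltilde`. -/
noncomputable def lofh (X : C) {a : G} (hX : gr.mem X a) (f : X ⟶ X) : Ltilde gr :=
  letI := Classical.decEq (Homog gr)
  DirectSum.lof k (Homog gr) (fun X => (X.1 ⟶ X.1)) ⟨X, ⟨a, hX⟩⟩ f

/-- The submodule of trace relations `⟨X, fg⟩ - ⟨Y, gf⟩`. -/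
noncomputable def fusionRel : Submodule k (Ltilde gr) :=
  Submodule.span k
    {x | ∃ (X Y : C) (a : G) (hX : gr.mem X a) (hY : gr.mem Y a) (f : Y ⟶ X) (g : X ⟶ Y),
      x = lofh k gr X hX (g ≫ f) - lofh k gr Y hY (f ≫ g)}

/-- The fusion algebra (as a `k`-module) of a `G`-graded category. -/
abbrev FusionL : Type _ := Ltilde gr ⧸ fusionRel k gr

/-- The class `⟨X, f⟩` of an endomorphism of a homogeneous object in the fusion algebra. -/
noncomputable def fcls (X : C) {a : G} (hX : gr.mem X a) (f : X ⟶ X) : FusionL k gr :=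
  Submodule.Quotient.mk (lofh k gr X hX f)

/-- The degree-`a` part of the fusion algebra. -/
noncomputable def FusionLsub (a : G) : Submodule k (FusionL k gr) :=
  Submodule.span k {x | ∃ (X : C) (hX : gr.mem X a) (f : X ⟶ X), x = fcls k gr X hX f}

end FusionAlg

section Fusion

variable (k : Type w) [CommRing k]
variable {C : Type u} [Category.{v} C] [Preadditive C] [CategoryTheory.Linear k C]

/-- An object `X` is simple if `End(X)` is a free `k`-module of rank one with basis `id_X`. -/
def SimpleObj (X : C) : Prop := ∀ f : X ⟶ X, ∃! c : k, f = c • 𝟙 X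

variable (C) [MonoidalCategory C] [Pivotal C] [MonoidalPreadditive C] [MonoidalLinear k C]
  [HasFiniteBiproducts C]

/-- A pre-fusion category over `k`: a split semisimple `k`-additive pivotal category
with simple unit object. -/
structure PreFusion : Prop where
  semisimple : ∀ X : C, ∃ (n : ℕ) (s : Fin n → C),
    (∀ i, SimpleObj k (s i)) ∧ Nonempty (X ≅ ⨁ s)
  hom_vanish : ∀ {X Y : C}, SimpleObj k X → SimpleObj k Y → IsEmpty (X ≅ Y) →
    ∀ f : X ⟶ Y, f = 0
  unit_simple : SimpleObj k (𝟙_ C)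

end Fusion

/-! Since `⊗` and `(-)^*` are functorial, `⟨X, f⟩ ⟨Y, g⟩ = ⟨X ⊗ Y, f ⊗ g⟩` and
`⟨X, f⟩^* = ⟨X^*, f^*⟩` respect the trace relations `⟨X, g f⟩ = ⟨Y, f g⟩` and so descend to the
fusion module. In the quotient, an endomorphism and its conjugate by an isomorphism have the same
class. The associator and unitors therefore give associativity and unitality, the natural
isomorphism `X ≅ X^{**}` (natural because left and right duals of morphisms agree in a pivotal
category) gives `** = id`, and the isomorphism `(X ⊗ Y)^* ≅ Y^* ⊗ X^*` gives
`(x y)^* = y^* x^*`. -/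

section RigidMates

variable {C : Type u} [Category.{v} C] [MonoidalCategory C]

theorem rightAdjointMate_leftAdjointMate {X Y : C} [HasLeftDual X] [HasLeftDual Y]
    (f : X ⟶ Y) : (ᘁf)ᘁ = f :=
  calc
    _ = 𝟙 X ⊗≫ X ◁ (η_ (ᘁY) Y ≫ (ᘁf) ▷ Y) ⊗≫ ε_ (ᘁX) X ▷ Y ⊗≫ 𝟙 Y := by
          dsimp only [rightAdjointMate]; monoidal
    _ = 𝟙 X ⊗≫ X ◁ η_ (ᘁX) X ⊗≫ ((X ⊗ ᘁX) ◁ f ≫ ε_ (ᘁX) X ▷ Y) ⊗≫ 𝟙 Y := by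
          rw [coevaluation_comp_leftAdjointMate]; monoidal
    _ = 𝟙 X ⊗≫ (X ◁ η_ (ᘁX) X ⊗≫ ε_ (ᘁX) X ▷ X) ⊗≫ f := by
          rw [whisker_exchange]; monoidal
    _ = f := by
          rw [ExactPairing.coevaluation_evaluation'']; monoidal

theorem rightAdjointMate_eq_of_comp_evaluation {X Y : C} [HasRightDual X] [HasRightDual Y]
    {f : X ⟶ Y} {u : Yᘁ ⟶ Xᘁ} (hu : u ▷ X ≫ ε_ X Xᘁ = Yᘁ ◁ f ≫ ε_ Y Yᘁ) : u = fᘁ := by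
  have h := congrArg (tensorRightHomEquiv (Yᘁ) X Xᘁ (𝟙_ C)) hu
  rw [tensorRightHomEquiv_whiskerRight_comp_evaluation,
    tensorRightHomEquiv_whiskerLeft_comp_evaluation] at h
  exact (cancel_mono (λ_ _).inv).mp h

theorem rightAdjointMate_tensorHom {X₁ X₂ Y₁ Y₂ : C} [HasRightDual X₁] [HasRightDual X₂]
    [HasRightDual Y₁] [HasRightDual Y₂] (f : X₁ ⟶ X₂) (g : Y₁ ⟶ Y₂) :
    @rightAdjointMate _ _ _ _ _ hasRightDualTensor hasRightDualTensor (f ⊗ₘ g)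
      = gᘁ ⊗ₘ fᘁ := by
  refine (@rightAdjointMate_eq_of_comp_evaluation _ _ _ _ _ hasRightDualTensor
    hasRightDualTensor _ _ ?_).symm
  show (gᘁ ⊗ₘ fᘁ) ▷ (X₁ ⊗ Y₁) ≫ (𝟙 _ ⊗≫ (Y₁ᘁ : C) ◁ (ε_ X₁ X₁ᘁ ▷ Y₁) ⊗≫ ε_ Y₁ Y₁ᘁ)
    = (Y₂ᘁ ⊗ X₂ᘁ : C) ◁ (f ⊗ₘ g) ≫ (𝟙 _ ⊗≫ (Y₂ᘁ : C) ◁ (ε_ X₂ X₂ᘁ ▷ Y₂) ⊗≫ ε_ Y₂ Y₂ᘁ)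
  calc
    _ = 𝟙 _ ⊗≫ (gᘁ ▷ ((X₂ᘁ ⊗ X₁) ⊗ Y₁ : C) ≫ (Y₁ᘁ : C) ◁ ((fᘁ ▷ X₁ ≫ ε_ X₁ X₁ᘁ) ▷ Y₁))
          ⊗≫ ε_ Y₁ Y₁ᘁ := by
      rw [MonoidalCategory.tensorHom_def]; monoidal
    _ = 𝟙 _ ⊗≫ (Y₂ᘁ : C) ◁ (((X₂ᘁ : C) ◁ f ≫ ε_ X₂ X₂ᘁ) ▷ Y₁) ⊗≫ (gᘁ ▷ Y₁ ≫ ε_ Y₁ Y₁ᘁ) := by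
      rw [rightAdjointMate_comp_evaluation, ← whisker_exchange]; monoidal
    _ = 𝟙 _ ⊗≫ (((Y₂ᘁ : C) ◁ ((X₂ᘁ : C) ◁ f ≫ ε_ X₂ X₂ᘁ)) ▷ Y₁ ≫ (Y₂ᘁ ⊗ 𝟙_ C : C) ◁ g)
          ⊗≫ ε_ Y₂ Y₂ᘁ := by
      rw [rightAdjointMate_comp_evaluation]; monoidal
    _ = _ := by
      rw [← whisker_exchange, MonoidalCategory.tensorHom_def']; monoidal

theorem rightAdjointMate_comp_rightDualIso_hom {X X' : C} (dX₁ dX₂ : HasRightDual X)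
    (dX'₁ dX'₂ : HasRightDual X') (f : X ⟶ X') :
    @rightAdjointMate _ _ _ _ _ dX₁ dX'₁ f ≫ (rightDualIso dX₁.exact dX₂.exact).hom
      = (rightDualIso dX'₁.exact dX'₂.exact).hom ≫ @rightAdjointMate _ _ _ _ _ dX₂ dX'₂ f := by
  simp only [rightDualIso]
  rw [← @comp_rightAdjointMate, ← @comp_rightAdjointMate, Category.comp_id, Category.id_comp]

end RigidMates

section Linear

variable {k : Type w} [CommRing k]
variable {C : Type u} [Category.{v} C] [MonoidalCategory C] [Preadditive C]
  [CategoryTheory.Linear k C] [MonoidalPreadditive C] [MonoidalLinear k C]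

theorem smul_tensorHom (c : k) {X X' Y Y' : C} (f : X ⟶ X') (g : Y ⟶ Y') :
    (c • f) ⊗ₘ g = c • (f ⊗ₘ g) := by
  simp [MonoidalCategory.tensorHom_def]

theorem tensorHom_smul (c : k) {X X' Y Y' : C} (f : X ⟶ X') (g : Y ⟶ Y') :
    f ⊗ₘ (c • g) = c • (f ⊗ₘ g) := by
  simp [MonoidalCategory.tensorHom_def]

end Linear

namespace Pivotal

variable {C : Type u} [Category.{v} C] [MonoidalCategory C] [Pivotal C]

instance exactPairing (X : C) : ExactPairing X (dual X) where
  coevaluation' := coev X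
  evaluation' := ev X
  coevaluation_evaluation' := by
    rw [← cancel_epi (ρ_ (dual X)).inv, ← cancel_mono (λ_ (dual X)).hom]
    simpa using zig₂ X
  evaluation_coevaluation' := by
    rw [← cancel_epi (λ_ X).inv, ← cancel_mono (ρ_ X).hom]
    simpa using zig₁ X

abbrev exactPairingDual (X : C) : ExactPairing (dual X) X where
  coevaluation' := coev' X
  evaluation' := ev' X
  coevaluation_evaluation' := by
    rw [← cancel_epi (ρ_ X).inv, ← cancel_mono (λ_ X).hom]
    simpa using zig₃ X
  evaluation_coevaluation' := by
    rw [← cancel_epi (λ_ (dual X)).inv, ← cancel_mono (ρ_ (dual X)).hom]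
    simpa using zig₄ X

instance hasRightDual (X : C) : HasRightDual X := ⟨dual X⟩

instance hasLeftDual (X : C) : HasLeftDual X :=
  @HasLeftDual.mk _ _ _ X (dual X) (exactPairingDual X)

theorem dualHom_eq_rightAdjointMate {X Y : C} (f : X ⟶ Y) : dualHom f = fᘁ := by
  simp only [dualHom, rightAdjointMate, MonoidalCategory.whiskerLeft_comp, Category.assoc]
  rfl

theorem rightAdjointMate_eq_leftAdjointMate {X Y : C} (f : X ⟶ Y) : fᘁ = ᘁf := by
  have h := dual_hom_eq f
  simp only [MonoidalCategory.whiskerLeft_comp, comp_whiskerRight, Category.assoc] at h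
  simp only [rightAdjointMate, leftAdjointMate]
  exact h

theorem dualHom_comp {X Y Z : C} (f : X ⟶ Y) (g : Y ⟶ Z) :
    dualHom (f ≫ g) = dualHom g ≫ dualHom f := by
  simp only [dualHom_eq_rightAdjointMate, comp_rightAdjointMate]

section Linear

variable {k : Type w} [CommRing k] [Preadditive C] [CategoryTheory.Linear k C]
  [MonoidalPreadditive C] [MonoidalLinear k C]

theorem dualHom_add {X Y : C} (f g : X ⟶ Y) : dualHom (f + g) = dualHom f + dualHom g := by
  simp [dualHom]

theorem dualHom_smul (c : k) {X Y : C} (f : X ⟶ Y) : dualHom (c • f) = c • dualHom f := by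
  simp [dualHom]

end Linear

noncomputable def doubleDualIso (X : C) : X ≅ dual (dual X) :=
  rightDualIso (exactPairingDual X) (exactPairing (dual X))

theorem comp_doubleDualIso_hom {X Y : C} (f : X ⟶ Y) :
    f ≫ (doubleDualIso Y).hom = (doubleDualIso X).hom ≫ dualHom (dualHom f) := by
  have h := rightAdjointMate_comp_rightDualIso_hom (@HasRightDual.mk _ _ _ (dual Y) Y
    (exactPairingDual Y)) (hasRightDual _) (@HasRightDual.mk _ _ _ (dual X) X
    (exactPairingDual X)) (hasRightDual _) (fᘁ)
  rw [rightAdjointMate_eq_leftAdjointMate f, rightAdjointMate_leftAdjointMate,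
    ← rightAdjointMate_eq_leftAdjointMate] at h
  rw [dualHom_eq_rightAdjointMate, dualHom_eq_rightAdjointMate]
  exact h

theorem dualHom_tensorHom_comp {X₁ X₂ Y₁ Y₂ : C} (f : X₁ ⟶ X₂) (g : Y₁ ⟶ Y₂) :
    dualHom (f ⊗ₘ g) ≫ (rightDualTensorIso X₁ Y₁).hom
      = (rightDualTensorIso X₂ Y₂).hom ≫ (dualHom g ⊗ₘ dualHom f) := by
  have h := rightAdjointMate_comp_rightDualIso_hom (hasRightDual _) hasRightDualTensor
    (hasRightDual _) hasRightDualTensor (f ⊗ₘ g)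
  rw [rightAdjointMate_tensorHom] at h
  rw [dualHom_eq_rightAdjointMate, dualHom_eq_rightAdjointMate, dualHom_eq_rightAdjointMate]
  exact h

end Pivotal

section FusionAlgebra

variable {k : Type w} [CommRing k] {G : Type x} [Group G]
variable {C : Type u} [Category.{v} C] [MonoidalCategory C] [Pivotal C]
  [Preadditive C] [CategoryTheory.Linear k C] [MonoidalPreadditive C] [MonoidalLinear k C]
variable (k) (gr : GGraded G C)

theorem fcls_add {X : C} {a : G} (hX : gr.mem X a) (f g : X ⟶ X) :
    fcls k gr X hX (f + g) = fcls k gr X hX f + fcls k gr X hX g := by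
  simp only [fcls, lofh, map_add, Submodule.Quotient.mk_add]

theorem fcls_smul {X : C} {a : G} (hX : gr.mem X a) (c : k) (f : X ⟶ X) :
    fcls k gr X hX (c • f) = c • fcls k gr X hX f := by
  simp only [fcls, lofh, map_smul, Submodule.Quotient.mk_smul]

theorem fcls_zero {X : C} {a : G} (hX : gr.mem X a) : fcls k gr X hX 0 = 0 := by
  simpa using fcls_smul k gr hX 0 0

theorem fcls_comp_comm {X Y : C} {a : G} (hX : gr.mem X a) (hY : gr.mem Y a)
    (f : Y ⟶ X) (g : X ⟶ Y) : fcls k gr X hX (g ≫ f) = fcls k gr Y hY (f ≫ g) := by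
  rw [fcls, fcls, Submodule.Quotient.eq]
  exact Submodule.subset_span ⟨X, Y, a, hX, hY, f, g, rfl⟩

theorem fcls_eq_of_iso {X Y : C} {a : G} (hX : gr.mem X a) (hY : gr.mem Y a) (e : X ≅ Y)
    {f : X ⟶ X} {g : Y ⟶ Y} (h : f ≫ e.hom = e.hom ≫ g) :
    fcls k gr X hX f = fcls k gr Y hY g := by
  have := fcls_comp_comm k gr hX hY e.inv (f ≫ e.hom)
  rwa [Category.assoc, e.hom_inv_id, Category.comp_id, h, e.inv_hom_id_assoc] at this

theorem FusionL.induction_on {P : FusionL k gr → Prop} (x : FusionL k gr)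
    (fcls : ∀ (X : C) (a : G) (hX : gr.mem X a) (f : X ⟶ X), P (fcls k gr X hX f))
    (add : ∀ x y, P x → P y → P (x + y)) : P x := by
  obtain ⟨y, rfl⟩ := Submodule.Quotient.mk_surjective _ x
  classical
  induction y using DirectSum.induction_on with
  | zero => simpa [fcls_zero] using fcls (𝟙_ C) 1 gr.unit_mem 0
  | of p f => exact fcls p.1 _ p.2.choose_spec f
  | add y z hy hz => exact add _ _ hy hz

variable {k gr} {M : Type*} [AddCommGroup M] [Module k M]

noncomputable def FusionL.lift (φ : ∀ p : Homog gr, (p.1 ⟶ p.1) →ₗ[k] M)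
    (hφ : ∀ (X Y : C) (a : G) (hX : gr.mem X a) (hY : gr.mem Y a) (f : Y ⟶ X) (g : X ⟶ Y),
      φ ⟨X, a, hX⟩ (g ≫ f) = φ ⟨Y, a, hY⟩ (f ≫ g)) :
    FusionL k gr →ₗ[k] M :=
  letI := Classical.decEq (Homog gr)
  (fusionRel k gr).liftQ (DirectSum.toModule k _ _ φ) <| Submodule.span_le.mpr <| by
    rintro _ ⟨X, Y, a, hX, hY, f, g, rfl⟩
    rw [SetLike.mem_coe, LinearMap.mem_ker, map_sub, sub_eq_zero]
    erw [DirectSum.toModule_lof, DirectSum.toModule_lof]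
    exact hφ X Y a hX hY f g

theorem FusionL.lift_fcls (φ : ∀ p : Homog gr, (p.1 ⟶ p.1) →ₗ[k] M)
    (hφ : ∀ (X Y : C) (a : G) (hX : gr.mem X a) (hY : gr.mem Y a) (f : Y ⟶ X) (g : X ⟶ Y),
      φ ⟨X, a, hX⟩ (g ≫ f) = φ ⟨Y, a, hY⟩ (f ≫ g))
    {X : C} {a : G} (hX : gr.mem X a) (f : X ⟶ X) :
    FusionL.lift φ hφ (fcls k gr X hX f) = φ ⟨X, a, hX⟩ f := by
  erw [FusionL.lift, Submodule.liftQ_apply, DirectSum.toModule_lof]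

theorem FusionL.linearMap_ext {φ ψ : FusionL k gr →ₗ[k] M}
    (h : ∀ (X : C) (a : G) (hX : gr.mem X a) (f : X ⟶ X),
      φ (fcls k gr X hX f) = ψ (fcls k gr X hX f)) : φ = ψ :=
  LinearMap.ext fun x => FusionL.induction_on (P := fun x => φ x = ψ x) k gr x h
    fun x y hx hy => by rw [map_add, map_add, hx, hy]

variable (k gr)

theorem fcls_comp_tensorHom_comm {X Y Z : C} {a c : G} (hX : gr.mem X a) (hY : gr.mem Y a)
    (hZ : gr.mem Z c) (f : Y ⟶ X) (g : X ⟶ Y) (h : Z ⟶ Z) :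
    fcls k gr (X ⊗ Z) (gr.tensor_mem hX hZ) ((g ≫ f) ⊗ₘ h)
      = fcls k gr (Y ⊗ Z) (gr.tensor_mem hY hZ) ((f ≫ g) ⊗ₘ h) := by
  have := fcls_comp_comm k gr (gr.tensor_mem hX hZ) (gr.tensor_mem hY hZ) (f ⊗ₘ 𝟙 Z) (g ⊗ₘ h)
  rwa [tensorHom_comp_tensorHom, tensorHom_comp_tensorHom, Category.comp_id,
    Category.id_comp] at this

theorem fcls_tensorHom_comp_comm {X Y Z : C} {a c : G} (hX : gr.mem X a) (hY : gr.mem Y a)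
    (hZ : gr.mem Z c) (f : Y ⟶ X) (g : X ⟶ Y) (h : Z ⟶ Z) :
    fcls k gr (Z ⊗ X) (gr.tensor_mem hZ hX) (h ⊗ₘ (g ≫ f))
      = fcls k gr (Z ⊗ Y) (gr.tensor_mem hZ hY) (h ⊗ₘ (f ≫ g)) := by
  have := fcls_comp_comm k gr (gr.tensor_mem hZ hX) (gr.tensor_mem hZ hY) (𝟙 Z ⊗ₘ f) (h ⊗ₘ g)
  rwa [tensorHom_comp_tensorHom, tensorHom_comp_tensorHom, Category.comp_id,
    Category.id_comp] at this

noncomputable def tensorFcls (p q : Homog gr) :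
    (p.1 ⟶ p.1) →ₗ[k] (q.1 ⟶ q.1) →ₗ[k] FusionL k gr :=
  LinearMap.mk₂ k
    (fun f g => fcls k gr (p.1 ⊗ q.1) (gr.tensor_mem p.2.choose_spec q.2.choose_spec) (f ⊗ₘ g))
    (fun f f' g => by rw [MonoidalPreadditive.add_tensor, fcls_add])
    (fun c f g => by rw [smul_tensorHom, fcls_smul])
    (fun f g g' => by rw [MonoidalPreadditive.tensor_add, fcls_add])
    (fun c f g => by rw [tensorHom_smul, fcls_smul])

/-- `fusionMulRight q x f = x ⟨q, f⟩`. -/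
noncomputable def fusionMulRight (q : Homog gr) :
    FusionL k gr →ₗ[k] (q.1 ⟶ q.1) →ₗ[k] FusionL k gr :=
  FusionL.lift (fun p => tensorFcls k gr p q) fun X Y a hX hY f g => by
    ext h
    exact fcls_comp_tensorHom_comm k gr hX hY q.2.choose_spec f g h

noncomputable def fusionMul : FusionL k gr →ₗ[k] FusionL k gr →ₗ[k] FusionL k gr :=
  (FusionL.lift (fun q => (fusionMulRight k gr q).flip) fun X Y a hX hY f g => by
    refine FusionL.linearMap_ext fun Z c hZ h => ?_
    simp only [LinearMap.flip_apply, fusionMulRight, FusionL.lift_fcls]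
    exact fcls_tensorHom_comp_comm k gr hX hY hZ f g h).flip

theorem fusionMul_fcls {X Y : C} {a b : G} (hX : gr.mem X a) (hY : gr.mem Y b)
    (f : X ⟶ X) (g : Y ⟶ Y) :
    fusionMul k gr (fcls k gr X hX f) (fcls k gr Y hY g)
      = fcls k gr (X ⊗ Y) (gr.tensor_mem hX hY) (f ⊗ₘ g) := by
  simp only [fusionMul, fusionMulRight, LinearMap.flip_apply, FusionL.lift_fcls]
  rfl

noncomputable def dualFcls (p : Homog gr) : (p.1 ⟶ p.1) →ₗ[k] FusionL k gr where
  toFun f := fcls k gr (dual p.1) (gr.dual_mem p.2.choose_spec) (dualHom f)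
  map_add' f g := by rw [dualHom_add, fcls_add]
  map_smul' c f := by rw [dualHom_smul, fcls_smul]; rfl

noncomputable def fusionStar : FusionL k gr →ₗ[k] FusionL k gr :=
  FusionL.lift (dualFcls k gr) fun X Y a hX hY f g => by
    simp only [dualFcls, LinearMap.coe_mk, AddHom.coe_mk, dualHom_comp]
    exact fcls_comp_comm k gr (gr.dual_mem hX) (gr.dual_mem hY) (dualHom g) (dualHom f)

theorem fusionStar_fcls {X : C} {a : G} (hX : gr.mem X a) (f : X ⟶ X) :
    fusionStar k gr (fcls k gr X hX f) = fcls k gr (dual X) (gr.dual_mem hX) (dualHom f) :=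
  FusionL.lift_fcls _ _ hX f

theorem fusionMul_assoc (x y z : FusionL k gr) :
    fusionMul k gr (fusionMul k gr x y) z = fusionMul k gr x (fusionMul k gr y z) := by
  induction x using FusionL.induction_on k gr with
  | add x x' hx hx' => simp only [map_add, LinearMap.add_apply, hx, hx']
  | fcls X a hX f =>
    induction y using FusionL.induction_on k gr with
    | add y y' hy hy' => simp only [map_add, LinearMap.add_apply, hy, hy']
    | fcls Y b hY g =>
      induction z using FusionL.induction_on k gr with
      | add z z' hz hz' => simp only [map_add, hz, hz']
      | fcls Z c hZ h =>
        simp only [fusionMul_fcls]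
        have hXYZ : gr.mem (X ⊗ (Y ⊗ Z)) (a * b * c) :=
          mul_assoc a b c ▸ gr.tensor_mem hX (gr.tensor_mem hY hZ)
        exact fcls_eq_of_iso k gr _ hXYZ (α_ X Y Z) (associator_naturality f g h)

theorem fusionMul_one_left (x : FusionL k gr) :
    fusionMul k gr (fcls k gr (𝟙_ C) gr.unit_mem (𝟙 (𝟙_ C))) x = x := by
  induction x using FusionL.induction_on k gr with
  | add x x' hx hx' => simp only [map_add, hx, hx']
  | fcls X a hX f =>
    rw [fusionMul_fcls]
    exact fcls_eq_of_iso k gr (one_mul a ▸ gr.tensor_mem gr.unit_mem hX) hX (λ_ X) (by simp)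

theorem fusionMul_one_right (x : FusionL k gr) :
    fusionMul k gr x (fcls k gr (𝟙_ C) gr.unit_mem (𝟙 (𝟙_ C))) = x := by
  induction x using FusionL.induction_on k gr with
  | add x x' hx hx' => simp only [map_add, LinearMap.add_apply, hx, hx']
  | fcls X a hX f =>
    rw [fusionMul_fcls]
    exact fcls_eq_of_iso k gr (mul_one a ▸ gr.tensor_mem hX gr.unit_mem) hX (ρ_ X) (by simp)

theorem fusionStar_fusionStar (x : FusionL k gr) : fusionStar k gr (fusionStar k gr x) = x := by
  induction x using FusionL.induction_on k gr with
  | add x x' hx hx' => simp only [map_add, hx, hx']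
  | fcls X a hX f =>
    rw [fusionStar_fcls, fusionStar_fcls]
    exact (fcls_eq_of_iso k gr hX (inv_inv a ▸ gr.dual_mem (gr.dual_mem hX))
      (doubleDualIso X) (comp_doubleDualIso_hom f)).symm

theorem fusionStar_fusionMul (x y : FusionL k gr) :
    fusionStar k gr (fusionMul k gr x y)
      = fusionMul k gr (fusionStar k gr y) (fusionStar k gr x) := by
  induction x using FusionL.induction_on k gr with
  | add x x' hx hx' => simp only [map_add, LinearMap.add_apply, hx, hx']
  | fcls X a hX f =>
    induction y using FusionL.induction_on k gr with
    | add y y' hy hy' => simp only [map_add, LinearMap.add_apply, hy, hy']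
    | fcls Y b hY g =>
      simp only [fusionMul_fcls, fusionStar_fcls]
      have hYX : gr.mem (dual Y ⊗ dual X) (a * b)⁻¹ :=
        (mul_inv_rev a b).symm ▸ gr.tensor_mem (gr.dual_mem hY) (gr.dual_mem hX)
      exact fcls_eq_of_iso k gr _ hYX (rightDualTensorIso X Y) (dualHom_tensorHom_comp f g)

theorem fusionMul_mem_fusionLsub {a b : G} {x y : FusionL k gr} (hx : x ∈ FusionLsub k gr a)
    (hy : y ∈ FusionLsub k gr b) : fusionMul k gr x y ∈ FusionLsub k gr (a * b) := by
  have hxy := Submodule.apply_mem_map₂ (fusionMul k gr) hx hy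
  rw [FusionLsub, FusionLsub, Submodule.map₂_span_span] at hxy
  refine Submodule.span_le.mpr ?_ hxy
  rintro _ ⟨_, ⟨X, hX, f, rfl⟩, _, ⟨Y, hY, g, rfl⟩, rfl⟩
  dsimp only
  rw [fusionMul_fcls]
  exact Submodule.subset_span ⟨_, _, _, rfl⟩

theorem iSup_fusionLsub_eq_top : ⨆ a : G, FusionLsub k gr a = ⊤ := by
  rw [eq_top_iff]
  rintro x -
  induction x using FusionL.induction_on k gr with
  | add x x' hx hx' => exact add_mem hx hx'
  | fcls X a hX f =>
    exact Submodule.mem_iSup_of_mem a (Submodule.subset_span ⟨X, hX, f, rfl⟩)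

theorem map_fusionStar_fusionLsub_le (a : G) :
    (FusionLsub k gr a).map (fusionStar k gr) ≤ FusionLsub k gr a⁻¹ := by
  rw [FusionLsub, Submodule.map_span_le]
  rintro _ ⟨X, hX, f, rfl⟩
  rw [fusionStar_fcls]
  exact Submodule.subset_span ⟨_, _, _, rfl⟩

theorem map_fusionStar_fusionLsub (a : G) :
    (FusionLsub k gr a).map (fusionStar k gr) = FusionLsub k gr a⁻¹ := by
  refine le_antisymm (map_fusionStar_fusionLsub_le k gr a) fun x hx => ?_
  refine ⟨fusionStar k gr x, ?_, fusionStar_fusionStar k gr x⟩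
  simpa only [inv_inv, SetLike.mem_coe] using
    map_fusionStar_fusionLsub_le k gr a⁻¹ (Submodule.mem_map_of_mem hx)

end FusionAlgebra

section Statement

variable {k : Type w} [CommRing k] {G : Type x} [Group G]
variable {C : Type u} [Category.{v} C] [MonoidalCategory C] [Pivotal C]
  [Preadditive C] [CategoryTheory.Linear k C] [MonoidalPreadditive C] [MonoidalLinear k C]

theorem statement15 (gr : GGraded G C) :
    ∃ (mul : FusionL k gr →ₗ[k] FusionL k gr →ₗ[k] FusionL k gr)
      (st : FusionL k gr →ₗ[k] FusionL k gr),
      -- multiplication of classes is induced by the monoidal product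
      (∀ (X Y : C) (a b : G) (hX : gr.mem X a) (hY : gr.mem Y b) (f : X ⟶ X) (g : Y ⟶ Y),
        mul (fcls k gr X hX f) (fcls k gr Y hY g)
          = fcls k gr (X ⊗ Y) (gr.tensor_mem hX hY) (f ⊗ₘ g)) ∧
      -- associativity
      (∀ x y z : FusionL k gr, mul (mul x y) z = mul x (mul y z)) ∧
      -- unit
      (∀ x : FusionL k gr, mul (fcls k gr (𝟙_ C) gr.unit_mem (𝟙 (𝟙_ C))) x = x) ∧
      (∀ x : FusionL k gr, mul x (fcls k gr (𝟙_ C) gr.unit_mem (𝟙 (𝟙_ C))) = x) ∧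
      -- the multiplication is G-graded
      (∀ (a b : G) (x y : FusionL k gr), x ∈ FusionLsub k gr a → y ∈ FusionLsub k gr b →
        mul x y ∈ FusionLsub k gr (a * b)) ∧
      ((⨆ a : G, FusionLsub k gr a) = ⊤) ∧
      -- the star map sends ⟨X, f⟩ to ⟨X^*, f^*⟩
      (∀ (X : C) (a : G) (hX : gr.mem X a) (f : X ⟶ X),
        st (fcls k gr X hX f) = fcls k gr (dual X) (gr.dual_mem hX) (dualHom f)) ∧
      -- star is an involutive algebra anti-automorphism
      (∀ x : FusionL k gr, st (st x) = x) ∧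
      (∀ x y : FusionL k gr, st (mul x y) = mul (st y) (st x)) ∧
      -- star carries L_a onto L_{a⁻¹}
      (∀ a : G, Submodule.map st (FusionLsub k gr a) = FusionLsub k gr a⁻¹) := by
  exact ⟨fusionMul k gr, fusionStar k gr, fun X Y a b hX hY f g => fusionMul_fcls k gr hX hY f g,
    fusionMul_assoc k gr, fusionMul_one_left k gr, fusionMul_one_right k gr,
    fun a b x y hx hy => fusionMul_mem_fusionLsub k gr hx hy, iSup_fusionLsub_eq_top k gr,
    fun X a hX f => fusionStar_fcls k gr hX f, fusionStar_fusionStar k gr,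
    fusionStar_fusionMul k gr, map_fusionStar_fusionLsub k gr⟩

end Statement

end SurgeryHQFT
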